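/- arXiv:1411.4693 — 3 statements merged into one kernel-verified Lean document; each statement's English description precedes it below -/
import Mathlib

section
/- Mutation of weight configurations is well-defined and involutive: if σ is a weight configuration on an ice quiver Δ (i.e., Bσ = 0 as matrices, where rows of σ are the weight vectors), then the mutated configuration σ' = φσ satisfies B'σ' = 0 for the mutated B-matrix B' = φ_p^T B φ, and mutating σ' again at the same vertex recovers σ. -/
open Matrix

namespace Matrix

variable {k l n o R : Type*} [Fintype n] [DecidableEq n] [Semiring R]

theorem mul_mul_cancel_left_of_mul_self_eq_one {φ : Matrix n n R} (hφ : φ * φ = 1)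
    (σ : Matrix n o R) : φ * (φ * σ) = σ := by
  rw [← Matrix.mul_assoc, hφ, Matrix.one_mul]

theorem mul_mul_eq_zero_of_mul_self_eq_one [Fintype l] (P : Matrix k l R)
    {B : Matrix l n R} {σ : Matrix n o R} {φ : Matrix n n R} (hφ : φ * φ = 1)
    (hσ : B * σ = 0) : (P * B * φ) * (φ * σ) = 0 := by
  rw [Matrix.mul_assoc, mul_mul_cancel_left_of_mul_self_eq_one hφ, Matrix.mul_assoc, hσ,
    Matrix.mul_zero]

end Matrix

theorem stmt_6_general (p q m : ℕ)
    (B : Matrix (Fin p) (Fin q) ℤ) (σ : Matrix (Fin q) (Fin m) ℤ)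
    (φ : Matrix (Fin q) (Fin q) ℤ) (hφ : φ * φ = 1) (hσ : B * σ = 0)
    (φp : Matrix (Fin p) (Fin p) ℤ) :
    (φpᵀ * B * φ) * (φ * σ) = 0 ∧ φ * (φ * σ) = σ :=
  ⟨mul_mul_eq_zero_of_mul_self_eq_one φpᵀ hφ hσ, mul_mul_cancel_left_of_mul_self_eq_one hφ σ⟩

/-- Mutation of weight configurations is well-defined and involutive: if `σ` is a
weight configuration on an ice quiver with `B`-matrix `B` (i.e. `B σ = 0`, rows of `σ`
being the weight vectors) and `φ` is the involutive `q × q` mutation matrix at a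
mutable vertex, then the mutated configuration `σ' = φ σ` satisfies `B' σ' = 0` for
the mutated `B`-matrix `B' = φ_pᵀ B φ`, and mutating `σ'` again recovers `σ`. -/
theorem stmt_6 (p q m : ℕ) (h : p ≤ q)
    (B : Matrix (Fin p) (Fin q) ℤ) (σ : Matrix (Fin q) (Fin m) ℤ)
    (φ : Matrix (Fin q) (Fin q) ℤ) (hφ : φ * φ = 1) (hσ : B * σ = 0)
    (φp : Matrix (Fin p) (Fin p) ℤ)
    (hφp : φp = Matrix.of fun v w => φ (Fin.castLE h v) (Fin.castLE h w)) :
    (φpᵀ * B * φ) * (φ * σ) = 0 ∧ φ * (φ * σ) = σ :=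
  stmt_6_general p q m B σ φ hφ hσ φp
end

section
/- For the ice hive quiver Δ_n (n ≥ 3), the B-matrix B(Δ_n) has full rank (rank equal to the number of mutable vertices, binomial(n−1,2)). -/
/-- Vertices of the ice hive quiver `Δ_n`: pairs `(i,j)` with `i + j ≤ n`,
excluding the three corners `(0,0)`, `(0,n)`, `(n,0)`. -/
abbrev HiveVertex (n : ℕ) : Type :=
  {p : Fin (n + 1) × Fin (n + 1) // (p.1 : ℕ) + (p.2 : ℕ) ≤ n ∧
    (p.1 : ℕ) + (p.2 : ℕ) ≠ 0 ∧ ¬((p.1 : ℕ) = 0 ∧ (p.2 : ℕ) = n) ∧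
    ¬((p.1 : ℕ) = n ∧ (p.2 : ℕ) = 0)}

/-- Mutable vertices of `Δ_n`: interior vertices `(i,j)` with `i, j ≥ 1`,
`i + j ≤ n - 1`. -/
abbrev HiveMutable (n : ℕ) : Type :=
  {p : Fin (n + 1) × Fin (n + 1) // 1 ≤ (p.1 : ℕ) ∧ 1 ≤ (p.2 : ℕ) ∧
    (p.1 : ℕ) + (p.2 : ℕ) + 1 ≤ n}

/-- Number of arrows from `s` to `t` in the hive quiver: northeast arrows
`(i,j) → (i,j-1)`, southeast arrows `(i,j) → (i+1,j)`, and west arrows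
`(i+1,j-1) → (i,j)`. -/
def hiveArrows (s t : ℕ × ℕ) : ℤ :=
  (if 1 ≤ s.2 ∧ t = (s.1, s.2 - 1) then 1 else 0) +
  (if t = (s.1 + 1, s.2) then 1 else 0) +
  (if 1 ≤ t.2 ∧ s = (t.1 + 1, t.2 - 1) then 1 else 0)

/-- The `B`-matrix of the ice hive quiver `Δ_n`, with rows indexed by mutable
vertices: `b_{u,v} = #arrows(u → v) - #arrows(v → u)`. -/
def hiveB (n : ℕ) : Matrix (HiveMutable n) (HiveVertex n) ℚ :=
  Matrix.of fun u v =>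
    ((hiveArrows ((u.1.1 : ℕ), (u.1.2 : ℕ)) ((v.1.1 : ℕ), (v.1.2 : ℕ)) -
      hiveArrows ((v.1.1 : ℕ), (v.1.2 : ℕ)) ((u.1.1 : ℕ), (u.1.2 : ℕ)) : ℤ) : ℚ)

/-!
Pair each mutable vertex `(i, j)` with the vertex `(i - 1, j + 1)` at the head of its west
arrow. Every other neighbour `(a, b)` of `(i - 1, j + 1)` has `a < i`, or `a = i` and `b > j`;
so, ordering mutable vertices lexicographically by `(i, -j)`, the square submatrix of `B` on
the columns `(i - 1, j + 1)` is unitriangular, and `B` has full row rank.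
-/

namespace Matrix

variable {m n R : Type*}

theorem BlockTriangular.det_of_injective [CommRing R] [Fintype m] [DecidableEq m]
    {α : Type*} [LinearOrder α] {M : Matrix m m R} {b : m → α} (hb : Function.Injective b)
    (hM : M.BlockTriangular b) : M.det = ∏ i, M i i :=
  letI : LinearOrder m := LinearOrder.lift' b hb
  det_of_isUpperTriangular hM

theorem rank_eq_card_height_of_isUnit_submatrix [CommRing R] [StrongRankCondition R]
    [Fintype m] [Fintype n] [DecidableEq m] (A : Matrix m n R) (c : m → n)
    (hA : IsUnit (A.submatrix id c)) : A.rank = Fintype.card m :=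
  le_antisymm (rank_le_card_height A)
    (rank_of_isUnit _ hA ▸ rank_submatrix_le A id c)

end Matrix

theorem hiveArrows_sub_west (i j : ℕ) (hi : 1 ≤ i) :
    hiveArrows (i, j) (i - 1, j + 1) - hiveArrows (i - 1, j + 1) (i, j) = 1 := by
  simp only [hiveArrows, Prod.mk.injEq]
  split_ifs <;> omega

theorem hiveArrows_sub_west_of_lt (i j a b : ℕ) (hi : 1 ≤ i)
    (h : i < a ∨ (i = a ∧ b < j)) :
    hiveArrows (a, b) (i - 1, j + 1) - hiveArrows (i - 1, j + 1) (a, b) = 0 := by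
  simp only [hiveArrows, Prod.mk.injEq]
  split_ifs <;> omega

def hiveMutableEquiv (n : ℕ) :
    HiveMutable n ≃ {x : Fin (n - 1) × Fin (n - 1) // x.1 < x.2} where
  toFun u := ⟨(⟨u.1.1 - 1, by omega⟩, ⟨u.1.1 + u.1.2 - 1, by omega⟩),
    Fin.lt_def.2 (by have := u.2; dsimp only; omega)⟩
  invFun x := ⟨(⟨x.1.1 + 1, by omega⟩, ⟨x.1.2 - x.1.1, by omega⟩),
    by have := Fin.lt_def.1 x.2; dsimp only; omega⟩
  left_inv u := by
    have := u.2
    ext <;> dsimp only <;> omega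
  right_inv x := by
    have := Fin.lt_def.1 x.2
    ext <;> dsimp only <;> omega

variable {n : ℕ}

theorem card_hiveMutable : Fintype.card (HiveMutable n) = (n - 1).choose 2 := by
  classical
  rw [Fintype.card_congr (hiveMutableEquiv n), Fintype.card_subtype,
    Fintype.card_product_filter_lt, Fintype.card_fin]

def hiveWestHead (u : HiveMutable n) : HiveVertex n :=
  ⟨(⟨u.1.1 - 1, by omega⟩, ⟨u.1.2 + 1, by have := u.2; omega⟩), by
    have := u.2
    dsimp only
    omega⟩

def hiveKey (u : HiveMutable n) : ℕ ×ₗ ℕᵒᵈ :=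
  toLex (u.1.1, OrderDual.toDual u.1.2)

theorem hiveKey_injective : Function.Injective (hiveKey (n := n)) := by
  intro u v huv
  simp only [hiveKey, toLex_inj, Prod.mk.injEq, OrderDual.toDual_inj] at huv
  ext <;> omega

theorem blockTriangular_hiveB_submatrix_westHead :
    ((hiveB n).submatrix id hiveWestHead).BlockTriangular hiveKey := by
  intro u v hvu
  replace hvu : (v.1.1 : ℕ) < u.1.1 ∨ ((v.1.1 : ℕ) = u.1.1 ∧ (u.1.2 : ℕ) < v.1.2) := by
    simpa only [hiveKey, Prod.Lex.toLex_lt_toLex, OrderDual.toDual_lt_toDual] using hvu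
  simp only [Matrix.submatrix_apply, id_eq, hiveB, Matrix.of_apply, hiveWestHead]
  rw [hiveArrows_sub_west_of_lt _ _ _ _ v.2.1 hvu, Int.cast_zero]

theorem hiveB_westHead (u : HiveMutable n) : hiveB n u (hiveWestHead u) = 1 := by
  simp only [hiveB, Matrix.of_apply, hiveWestHead]
  rw [hiveArrows_sub_west _ _ u.2.1, Int.cast_one]

theorem isUnit_hiveB_submatrix_westHead :
    IsUnit ((hiveB n).submatrix id hiveWestHead) := by
  rw [Matrix.isUnit_iff_isUnit_det,
    blockTriangular_hiveB_submatrix_westHead.det_of_injective hiveKey_injective]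
  simp [hiveB_westHead]

theorem stmt_8_general (n : ℕ) :
    (hiveB n).rank = (n - 1).choose 2 := by
  rw [Matrix.rank_eq_card_height_of_isUnit_submatrix _ _ isUnit_hiveB_submatrix_westHead,
    card_hiveMutable]

/-- The `B`-matrix of the ice hive quiver `Δ_n` has full rank, equal to the number
`(n-1).choose 2` of mutable vertices. -/
theorem stmt_8 (n : ℕ) (hn : 3 ≤ n) :
    (hiveB n).rank = (n - 1).choose 2 :=
  stmt_8_general n
end

section
/- Under the volume-preserving linear isomorphism φ (with (φg)(i,j) = Σ_{l≥j} g(i,l) for j≠0 and (φg)(i,0) = Σ_{k≥i,l} g(k,l)), the cone G_n of g-vectors maps onto the Littlewood–Richardson triangle cone LR_n; specifically, the inequalities defining LR_n pull back exactly to the inequalities defining G_n: h(i,j) ≥ 0 (ij≠0) corresponds to the nonnegativity of partial sums of g along straight NE paths and g(i,0) ≥ 0; inequality (2) of LR triangles corresponds to SE paths and g(i,j) ≥ 0 for i+j=n; inequality (3) corresponds to W paths and g(0,j) ≥ 0. -/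
/-!
On functions supported on `δ_n`, `φ` is inverted by the finite-difference map `ψ = phiInv n`,
`ψ h (i,j) = h(i,j) - h(i,j+1)` for `j ≠ 0`, `ψ h (i,0) = h(i,0) - h(i+1,0) - h(i,1)`.
Under `ψ` the sum along a straight path telescopes: along the NE path from `(i,j)` to `h(i,j)`,
along the SE path to a difference of two column sums as in (2), and along the W path to a
difference of two antidiagonal sums as in (3). The frozen inequalities are the path inequalities
of the one-vertex paths on the edge where the paths of each type end (diagonal for NE, left edge
for SE, bottom edge for W), so each of (1)–(3) is exactly one family of path inequalities for
`ψ h`.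
-/

open scoped Classical

open Finset

namespace Hive

def IsVertex (n : ℕ) (p : ℕ × ℕ) : Prop :=
  p.1 + p.2 ≤ n ∧ p.1 + p.2 ≠ 0 ∧ ¬(p.1 = 0 ∧ p.2 = n) ∧ ¬(p.1 = n ∧ p.2 = 0)

def IsFrozen (n : ℕ) (p : ℕ × ℕ) : Prop :=
  IsVertex n p ∧ (p.1 = 0 ∨ p.2 = 0 ∨ p.1 + p.2 = n)

def IsMutable (n : ℕ) (p : ℕ × ℕ) : Prop :=
  1 ≤ p.1 ∧ 1 ≤ p.2 ∧ p.1 + p.2 + 1 ≤ n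

def Supported (n : ℕ) (f : ℕ × ℕ → ℝ) : Prop :=
  ∀ p, ¬ IsVertex n p → f p = 0

def gCone (n : ℕ) : Set (ℕ × ℕ → ℝ) :=
  {g | Supported n g ∧ (∀ p, IsFrozen n p → 0 ≤ g p) ∧
    (∀ p, IsMutable n p → 0 ≤ ∑ l ∈ Icc p.2 (n - p.1), g (p.1, l)) ∧
    (∀ p, IsMutable n p → 0 ≤ ∑ x ∈ range (p.1 + 1), g (x, p.2)) ∧
    (∀ p, IsMutable n p → 0 ≤ ∑ t ∈ range (p.2 + 1), g (p.1 + t, p.2 - t))}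

/- Path inequalities for all paths of one type, the one-vertex paths at the frozen vertices where
these paths end included. -/
def NEPathsNonneg (n : ℕ) (g : ℕ × ℕ → ℝ) : Prop :=
  ∀ i j, 1 ≤ i → 1 ≤ j → i + j ≤ n → 0 ≤ ∑ l ∈ Icc j (n - i), g (i, l)

def SEPathsNonneg (n : ℕ) (g : ℕ × ℕ → ℝ) : Prop :=
  ∀ i j, 1 ≤ j → i + j + 1 ≤ n → 0 ≤ ∑ x ∈ range (i + 1), g (x, j)

def WPathsNonneg (n : ℕ) (g : ℕ × ℕ → ℝ) : Prop :=
  ∀ i j, 1 ≤ i → i + j + 1 ≤ n → 0 ≤ ∑ t ∈ range (j + 1), g (i + t, j - t)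

/- Inequalities (2) and (3) of LR triangles. -/
def ColumnIneq (n : ℕ) (h : ℕ × ℕ → ℝ) : Prop :=
  ∀ a b : ℕ, 1 ≤ b → b ≤ a → a ≤ n - 1 →
    ∑ x ∈ range (a - b + 1), h (x, b + 1) ≤ ∑ x ∈ range (a - b + 1), h (x, b)

def AntidiagIneq (n : ℕ) (h : ℕ × ℕ → ℝ) : Prop :=
  ∀ a b : ℕ, 1 ≤ b → b ≤ a → a ≤ n - 1 →
    ∑ x ∈ range (b + 1), h (a + 1 - x, x) ≤ ∑ x ∈ range b, h (a - x, x)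

def lrCone (n : ℕ) : Set (ℕ × ℕ → ℝ) :=
  {h | Supported n h ∧ (∀ a b : ℕ, a ≠ 0 → b ≠ 0 → 0 ≤ h (a, b)) ∧
    ColumnIneq n h ∧ AntidiagIneq n h}

noncomputable def phi (n : ℕ) (g : ℕ × ℕ → ℝ) : ℕ × ℕ → ℝ := fun p =>
  if IsVertex n p then
    (if p.2 ≠ 0 then ∑ l ∈ Icc p.2 n, g (p.1, l)
     else ∑ x ∈ Icc p.1 n, ∑ l ∈ range (n + 1), g (x, l))
  else 0

noncomputable def phiInv (n : ℕ) (h : ℕ × ℕ → ℝ) : ℕ × ℕ → ℝ := fun p =>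
  if IsVertex n p then
    (if p.2 ≠ 0 then h p - h (p.1, p.2 + 1)
     else h p - h (p.1 + 1, 0) - h (p.1, 1))
  else 0

section Telescoping

variable {M : Type*} [AddCommGroup M]

theorem sum_Icc_sub_succ (f : ℕ → M) {a b : ℕ} (hab : a ≤ b + 1) :
    ∑ l ∈ Icc a b, (f l - f (l + 1)) = f a - f (b + 1) := by
  rcases Nat.lt_or_ge b a with hba | hab'
  · rw [Icc_eq_empty (by omega), show a = b + 1 by omega, sum_empty, sub_self]
  · rw [← neg_sub, ← sum_Icc_sub hab', ← sum_neg_distrib]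
    simp only [neg_sub]

end Telescoping

variable {n : ℕ} {f g h : ℕ × ℕ → ℝ}

theorem Supported.eq_zero_of_lt_add (hf : Supported n f) {i j : ℕ} (h : n < i + j) :
    f (i, j) = 0 :=
  hf _ fun hv => by simp only [IsVertex] at hv; omega

theorem Supported.eq_zero_of_le_fst (hf : Supported n f) {i : ℕ} (j : ℕ) (h : n ≤ i) :
    f (i, j) = 0 :=
  hf _ fun hv => by simp only [IsVertex] at hv; omega

theorem supported_phi (n : ℕ) (g : ℕ × ℕ → ℝ) : Supported n (phi n g) :=
  fun _ hp => if_neg hp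

theorem supported_phiInv (n : ℕ) (h : ℕ × ℕ → ℝ) : Supported n (phiInv n h) :=
  fun _ hp => if_neg hp

theorem phiInv_of_pos (hh : Supported n h) (i : ℕ) {j : ℕ} (hj : 1 ≤ j) :
    phiInv n h (i, j) = h (i, j) - h (i, j + 1) := by
  by_cases hv : IsVertex n (i, j)
  · simp only [phiInv, if_pos hv, if_pos (show j ≠ 0 by omega)]
  · have hv' : ¬ IsVertex n (i, j + 1) := by simp only [IsVertex] at hv ⊢; omega
    simp only [phiInv, if_neg hv, hh _ hv, hh _ hv', sub_zero]

theorem phiInv_zero (hh : Supported n h) {i : ℕ} (hi : 1 ≤ i) :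
    phiInv n h (i, 0) = h (i, 0) - h (i + 1, 0) - h (i, 1) := by
  by_cases hv : IsVertex n (i, 0)
  · simp [phiInv, hv]
  · have hni : n ≤ i := by simp only [IsVertex] at hv; omega
    simp [phiInv, hv, hh.eq_zero_of_le_fst _ hni, hh.eq_zero_of_le_fst _ (hni.trans i.le_succ)]

theorem sum_Icc_phiInv (hh : Supported n h) (i : ℕ) {j m : ℕ} (hj : 1 ≤ j)
    (hjm : j ≤ m + 1) :
    ∑ l ∈ Icc j m, phiInv n h (i, l) = h (i, j) - h (i, m + 1) := by
  rw [← sum_Icc_sub_succ (fun l => h (i, l)) hjm]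
  exact sum_congr rfl fun l hl => phiInv_of_pos hh i (by simp only [mem_Icc] at hl; omega)

theorem sum_range_phiInv_row (hh : Supported n h) {i : ℕ} (hi : 1 ≤ i) :
    ∑ l ∈ range (n + 1), phiInv n h (i, l) = h (i, 0) - h (i + 1, 0) := by
  have hrow : ∑ l ∈ range n, phiInv n h (i, l + 1) = h (i, 1) - h (i, n + 1) := by
    rw [← sum_range_sub' (fun l => h (i, l + 1))]
    exact sum_congr rfl fun l _ => phiInv_of_pos hh i l.succ_pos
  rw [sum_range_succ', hrow, phiInv_zero hh hi, hh.eq_zero_of_lt_add (by omega : n < i + (n + 1))]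
  ring

theorem phi_phiInv (hh : Supported n h) : phi n (phiInv n h) = h := by
  funext ⟨i, j⟩
  by_cases hv : IsVertex n (i, j)
  · simp only [phi, if_pos hv]
    split_ifs with hj
    · rw [sum_Icc_phiInv hh i (by omega) (by simp only [IsVertex] at hv; omega),
        hh.eq_zero_of_lt_add (by omega : n < i + (n + 1)), sub_zero]
    · obtain rfl : j = 0 := not_not.mp hj
      have hi : 1 ≤ i ∧ i ≤ n := by simp only [IsVertex] at hv; omega
      rw [sum_congr rfl fun x hx =>
          sum_range_phiInv_row hh (i := x) (by simp only [mem_Icc] at hx; omega),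
        sum_Icc_sub_succ (fun x => h (x, 0)) (by omega),
        hh.eq_zero_of_lt_add (by omega : n < (n + 1) + 0), sub_zero]
  · rw [supported_phi n _ _ hv, hh _ hv]

theorem phi_of_pos (hg : Supported n g) (i : ℕ) {j : ℕ} (hj : 1 ≤ j) :
    phi n g (i, j) = ∑ l ∈ Icc j n, g (i, l) := by
  by_cases hv : IsVertex n (i, j)
  · simp only [phi, if_pos hv, if_pos (show j ≠ 0 by omega)]
  · rw [supported_phi n g _ hv]
    refine (sum_eq_zero fun l hl => hg _ fun hv' => hv ?_).symm
    simp only [IsVertex, mem_Icc] at hv' hl ⊢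
    omega

theorem phi_zero (hg : Supported n g) {i : ℕ} (hi : 1 ≤ i) :
    phi n g (i, 0) = ∑ x ∈ Icc i n, ∑ l ∈ range (n + 1), g (x, l) := by
  by_cases hv : IsVertex n (i, 0)
  · simp [phi, hv]
  · have hni : n ≤ i := by simp only [IsVertex] at hv; omega
    rw [supported_phi n g _ hv]
    refine (sum_eq_zero fun x hx => sum_eq_zero fun l _ => hg.eq_zero_of_le_fst l ?_).symm
    simp only [mem_Icc] at hx
    omega

theorem phiInv_phi (hg : Supported n g) : phiInv n (phi n g) = g := by
  funext ⟨i, j⟩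
  by_cases hv : IsVertex n (i, j)
  · have hv' := hv
    simp only [IsVertex] at hv'
    rcases Nat.eq_zero_or_pos j with rfl | hj
    · rw [phiInv_zero (supported_phi n g) (by omega), phi_zero hg (by omega),
        phi_zero hg (by omega), phi_of_pos hg i le_rfl,
        ← insert_Icc_add_one_left_eq_Icc (by omega : i ≤ n), sum_insert (by simp),
        range_eq_Ico, sum_eq_sum_Ico_succ_bot (by omega), zero_add, Ico_add_one_right_eq_Icc]
      ring
    · rw [phiInv_of_pos (supported_phi n g) i hj, phi_of_pos hg i hj, phi_of_pos hg i (by omega),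
        ← insert_Icc_add_one_left_eq_Icc (by omega : j ≤ n), sum_insert (by simp)]
      ring
  · rw [supported_phiInv n _ _ hv, hg _ hv]

theorem sum_phiInv_nePath (hh : Supported n h) {i j : ℕ} (hj : 1 ≤ j)
    (hij : i + j ≤ n) :
    ∑ l ∈ Icc j (n - i), phiInv n h (i, l) = h (i, j) := by
  rw [sum_Icc_phiInv hh i (m := n - i) hj (by omega),
    hh.eq_zero_of_lt_add (by omega : n < i + (n - i + 1)), sub_zero]

theorem sum_phiInv_sePath (hh : Supported n h) (m : ℕ) {j : ℕ} (hj : 1 ≤ j) :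
    ∑ x ∈ range m, phiInv n h (x, j) = ∑ x ∈ range m, h (x, j) - ∑ x ∈ range m, h (x, j + 1) := by
  rw [← sum_sub_distrib]
  exact sum_congr rfl fun x _ => phiInv_of_pos hh x hj

theorem sum_phiInv_wPath (hh : Supported n h) (j : ℕ) :
    ∀ {i : ℕ}, 1 ≤ i → ∑ t ∈ range (j + 1), phiInv n h (i + t, j - t) =
      ∑ x ∈ range (j + 1), h (i + j - x, x) - ∑ x ∈ range (j + 2), h (i + j + 1 - x, x) := by
  induction j with
  | zero =>
    intro i hi
    simp only [sum_range_succ, range_one, sum_singleton, add_zero, Nat.sub_zero,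
      Nat.add_sub_cancel, phiInv_zero hh hi]
    ring
  | succ j ih =>
    intro i hi
    have hshift : ∑ t ∈ range (j + 1), phiInv n h (i + (t + 1), j + 1 - (t + 1)) =
        ∑ t ∈ range (j + 1), phiInv n h (i + 1 + t, j - t) :=
      sum_congr rfl fun t _ => by rw [Nat.add_sub_add_right, ← add_assoc, add_right_comm i]
    rw [sum_range_succ', hshift, ih (by omega), phiInv_of_pos hh _ (by omega : 1 ≤ j + 1 - 0),
      sum_range_succ (fun x => h (i + (j + 1) - x, x)) (j + 1),
      sum_range_succ (fun x => h (i + (j + 1) + 1 - x, x)) (j + 2)]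
    simp only [show i + 1 + j = i + (j + 1) by ring, show i + (j + 1) + 1 - (j + 2) = i by omega,
      Nat.add_sub_cancel, add_zero, Nat.sub_zero]
    ring

theorem mem_gCone_iff :
    g ∈ gCone n ↔ Supported n g ∧ NEPathsNonneg n g ∧ SEPathsNonneg n g ∧ WPathsNonneg n g := by
  constructor
  · rintro ⟨hg, hfrozen, hNE, hSE, hW⟩
    refine ⟨hg, fun i j hi hj hij => ?_, fun i j hj hij => ?_, fun i j hi hij => ?_⟩
    · rcases hij.lt_or_eq with hij | rfl
      · exact hNE (i, j) ⟨hi, hj, hij⟩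
      · rw [Nat.add_sub_cancel_left, Icc_self, sum_singleton]
        exact hfrozen (i, j) ⟨by simp only [IsVertex]; omega, Or.inr (Or.inr rfl)⟩
    · rcases Nat.eq_zero_or_pos i with rfl | hi
      · rw [sum_range_one]
        exact hfrozen (0, j) ⟨by simp only [IsVertex]; omega, Or.inl rfl⟩
      · exact hSE (i, j) ⟨hi, hj, hij⟩
    · rcases Nat.eq_zero_or_pos j with rfl | hj
      · rw [sum_range_one]
        exact hfrozen (i + 0, 0 - 0) ⟨by simp only [IsVertex]; omega, Or.inr (Or.inl rfl)⟩
      · exact hW (i, j) ⟨hi, hj, hij⟩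
  · rintro ⟨hg, hNE, hSE, hW⟩
    refine ⟨hg, fun ⟨i, j⟩ ⟨hv, hedge⟩ => ?_, fun ⟨i, j⟩ ⟨hi, hj, hij⟩ => hNE i j hi hj (by omega),
      fun ⟨i, j⟩ ⟨_, hj, hij⟩ => hSE i j hj hij, fun ⟨i, j⟩ ⟨hi, _, hij⟩ => hW i j hi hij⟩
    simp only [IsVertex] at hv hedge
    rcases hedge with rfl | rfl | hdiag
    · simpa using hSE 0 j (by omega) (by omega)
    · simpa using hW i 0 (by omega) (by omega)
    · simpa [show n - i = j by omega] using hNE i j (by omega) (by omega) hdiag.le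

theorem nonneg_iff_nePathsNonneg_phiInv (hh : Supported n h) :
    (∀ a b : ℕ, a ≠ 0 → b ≠ 0 → 0 ≤ h (a, b)) ↔ NEPathsNonneg n (phiInv n h) := by
  constructor
  · intro hnonneg i j hi hj hij
    rw [sum_phiInv_nePath hh hj hij]
    exact hnonneg i j (by omega) (by omega)
  · intro hNE a b ha hb
    rcases le_or_gt (a + b) n with hab | hab
    · rw [← sum_phiInv_nePath hh (by omega) hab]
      exact hNE a b (by omega) (by omega) hab
    · rw [hh.eq_zero_of_lt_add hab]

theorem columnIneq_iff_sePathsNonneg_phiInv (hh : Supported n h) :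
    ColumnIneq n h ↔ SEPathsNonneg n (phiInv n h) := by
  constructor
  · intro hcol i j hj hij
    rw [sum_phiInv_sePath hh _ hj, sub_nonneg]
    simpa using hcol (i + j) j hj (by omega) (by omega)
  · intro hSE a b hb hba han
    rw [← sub_nonneg, ← sum_phiInv_sePath hh _ hb]
    exact hSE (a - b) b hb (by omega)

theorem antidiagIneq_iff_wPathsNonneg_phiInv (hh : Supported n h) :
    AntidiagIneq n h ↔ WPathsNonneg n (phiInv n h) := by
  constructor
  · intro hanti i j hi hij
    rw [sum_phiInv_wPath hh j hi, sub_nonneg]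
    exact hanti (i + j) (j + 1) (by omega) (by omega) (by omega)
  · intro hW a b hb hba han
    have key := hW (a + 1 - b) (b - 1) (by omega) (by omega)
    rw [sum_phiInv_wPath hh _ (by omega), sub_nonneg] at key
    simpa only [show a + 1 - b + (b - 1) = a by omega, show b - 1 + 1 = b by omega,
      show b - 1 + 2 = b + 1 by omega] using key

theorem phiInv_mem_gCone_iff (hh : Supported n h) : phiInv n h ∈ gCone n ↔ h ∈ lrCone n := by
  rw [mem_gCone_iff, ← nonneg_iff_nePathsNonneg_phiInv hh,
    ← columnIneq_iff_sePathsNonneg_phiInv hh, ← antidiagIneq_iff_wPathsNonneg_phiInv hh]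
  simp only [lrCone, Set.mem_ofPred_eq, supported_phiInv, hh, true_and]

theorem image_phi_gCone (n : ℕ) : phi n '' gCone n = lrCone n := by
  ext h
  constructor
  · rintro ⟨g, hg, rfl⟩
    rwa [← phiInv_mem_gCone_iff (supported_phi n g), phiInv_phi hg.1]
  · intro hh
    exact ⟨phiInv n h, (phiInv_mem_gCone_iff hh.1).2 hh, phi_phiInv hh.1⟩

end Hive

theorem stmt_12_general (n : ℕ)
    (δ : ℕ × ℕ → Prop)
    (hδ : δ = fun p => p.1 + p.2 ≤ n ∧ p.1 + p.2 ≠ 0 ∧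
      ¬(p.1 = 0 ∧ p.2 = n) ∧ ¬(p.1 = n ∧ p.2 = 0))
    (frozen mutbl : ℕ × ℕ → Prop)
    (hfrozen : frozen = fun p => δ p ∧ (p.1 = 0 ∨ p.2 = 0 ∨ p.1 + p.2 = n))
    (hmutbl : mutbl = fun p => 1 ≤ p.1 ∧ 1 ≤ p.2 ∧ p.1 + p.2 + 1 ≤ n)
    (G LR : Set (ℕ × ℕ → ℝ))
    (hG : G = {g | (∀ p, ¬ δ p → g p = 0) ∧
      (∀ p, frozen p → 0 ≤ g p) ∧
      (∀ p, mutbl p → 0 ≤ ∑ l ∈ Finset.Icc p.2 (n - p.1), g (p.1, l)) ∧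
      (∀ p, mutbl p → 0 ≤ ∑ x ∈ Finset.range (p.1 + 1), g (x, p.2)) ∧
      (∀ p, mutbl p → 0 ≤ ∑ t ∈ Finset.range (p.2 + 1), g (p.1 + t, p.2 - t))})
    (hLR : LR = {h | (∀ p, ¬ δ p → h p = 0) ∧
      (∀ a b : ℕ, a ≠ 0 → b ≠ 0 → 0 ≤ h (a, b)) ∧
      (∀ a b : ℕ, 1 ≤ b → b ≤ a → a ≤ n - 1 →
        ∑ x ∈ Finset.range (a - b + 1), h (x, b + 1) ≤
        ∑ x ∈ Finset.range (a - b + 1), h (x, b)) ∧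
      (∀ a b : ℕ, 1 ≤ b → b ≤ a → a ≤ n - 1 →
        ∑ x ∈ Finset.range (b + 1), h (a + 1 - x, x) ≤
        ∑ x ∈ Finset.range b, h (a - x, x))})
    (φ : (ℕ × ℕ → ℝ) → (ℕ × ℕ → ℝ))
    (hφ : φ = fun g p =>
      if δ p then
        (if p.2 ≠ 0 then ∑ l ∈ Finset.Icc p.2 n, g (p.1, l)
         else ∑ x ∈ Finset.Icc p.1 n, ∑ l ∈ Finset.range (n + 1), g (x, l))
      else 0) :
    φ '' G = LR := by
  subst hδ hfrozen hmutbl hG hLR hφ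
  exact Hive.image_phi_gCone n

/-- Under the volume-preserving linear map `φ` (with `(φ g)(i,j) = Σ_{l ≥ j} g(i,l)`
for `j ≠ 0` and `(φ g)(i,0) = Σ_{k ≥ i, l} g(k,l)`), the cone `G_n` of `g`-vectors —
defined by nonnegativity of `g` at frozen (boundary) vertices and nonnegativity of the
sums of `g` along the maximal straight paths through each mutable vertex (NE, SE, W
types) — maps onto the cone `LR_n` of Littlewood–Richardson triangles, defined by
inequalities (1)–(3).  Elements of `ℝ^{δ_n}` are encoded as real functions on `ℕ × ℕ`
supported on `δ_n`. -/
theorem stmt_12 (n : ℕ) (hn : 2 ≤ n)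
    (δ : ℕ × ℕ → Prop)
    (hδ : δ = fun p => p.1 + p.2 ≤ n ∧ p.1 + p.2 ≠ 0 ∧
      ¬(p.1 = 0 ∧ p.2 = n) ∧ ¬(p.1 = n ∧ p.2 = 0))
    (frozen mutbl : ℕ × ℕ → Prop)
    (hfrozen : frozen = fun p => δ p ∧ (p.1 = 0 ∨ p.2 = 0 ∨ p.1 + p.2 = n))
    (hmutbl : mutbl = fun p => 1 ≤ p.1 ∧ 1 ≤ p.2 ∧ p.1 + p.2 + 1 ≤ n)
    (G LR : Set (ℕ × ℕ → ℝ))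
    (hG : G = {g | (∀ p, ¬ δ p → g p = 0) ∧
      (∀ p, frozen p → 0 ≤ g p) ∧
      (∀ p, mutbl p → 0 ≤ ∑ l ∈ Finset.Icc p.2 (n - p.1), g (p.1, l)) ∧
      (∀ p, mutbl p → 0 ≤ ∑ x ∈ Finset.range (p.1 + 1), g (x, p.2)) ∧
      (∀ p, mutbl p → 0 ≤ ∑ t ∈ Finset.range (p.2 + 1), g (p.1 + t, p.2 - t))})
    (hLR : LR = {h | (∀ p, ¬ δ p → h p = 0) ∧
      (∀ a b : ℕ, a ≠ 0 → b ≠ 0 → 0 ≤ h (a, b)) ∧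
      (∀ a b : ℕ, 1 ≤ b → b ≤ a → a ≤ n - 1 →
        ∑ x ∈ Finset.range (a - b + 1), h (x, b + 1) ≤
        ∑ x ∈ Finset.range (a - b + 1), h (x, b)) ∧
      (∀ a b : ℕ, 1 ≤ b → b ≤ a → a ≤ n - 1 →
        ∑ x ∈ Finset.range (b + 1), h (a + 1 - x, x) ≤
        ∑ x ∈ Finset.range b, h (a - x, x))})
    (φ : (ℕ × ℕ → ℝ) → (ℕ × ℕ → ℝ))
    (hφ : φ = fun g p =>
      if δ p then
        (if p.2 ≠ 0 then ∑ l ∈ Finset.Icc p.2 n, g (p.1, l)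
         else ∑ x ∈ Finset.Icc p.1 n, ∑ l ∈ Finset.range (n + 1), g (x, l))
      else 0) :
    φ '' G = LR :=
  stmt_12_general n δ hδ frozen mutbl hfrozen hmutbl G LR hG hLR φ hφ
end
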